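/- Let Δ > 0, Λ > 0, r_l > 0, ε_f, ε_g, ε_c, ε_J ≥ 0, and let H ∈ ℝ^{n×n} be symmetric positive definite. Let (f, g, c, M) and (f̃, g̃, c̃, M̃) ∈ ℝ × ℝⁿ × ℝᵐ × ℝ^{m×n} satisfy |f̃ − f| ≤ ε_f, ‖g̃ − g‖ ≤ ε_g, ‖c̃ − c‖_∞ ≤ ε_c, ‖M̃ − M‖_∞ ≤ ε_J. Set ρ = min_{‖u‖≤Δ} ‖max{c̃ + M̃u, 0}‖_∞ and ρ̄ = min_{‖u‖≤Δ} ‖max{c + Mu, 0}‖_∞. Let d̃ be the optimal solution of min { g̃ᵀd + (1/2)dᵀHd : c̃ + M̃d ≤ ρ·1 } with a KKT multiplier λ̃ satisfying ‖λ̃‖_∞ ≤ Λ, and let d̄ be the optimal solution of min { gᵀd + (1/2)dᵀHd : c + Md ≤ ρ̄·1 } with a KKT multiplier λ̄ satisfying ‖λ̄‖_∞ ≤ Λ; assume ‖d̃‖ ≤ r_l and ‖d̄‖ ≤ r_l. Define the optimality measures ψ̃_o = −(g̃ᵀd̃ + (1/2)d̃ᵀHd̃) and ψ_o = −(gᵀd̄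 + (1/2)d̄ᵀHd̄). Then |ψ̃_o − ψ_o| ≤ 2ε_f + ε_g·r_l + mΛ·(2ε_c + ε_J·(r_l + Δ)). -/

import Mathlib

noncomputable section

/-- `Vec n` is `ℝⁿ` with the Euclidean norm. -/
abbrev Vec (n : ℕ) := EuclideanSpace ℝ (Fin n)

/-- The dot product `gᵀd`. -/
def dotp {n : ℕ} (g d : Vec n) : ℝ := ∑ i, g i * d i

/-- The quadratic form `dᵀHd`. -/
def quad {n : ℕ} (H : Matrix (Fin n) (Fin n) ℝ) (d : Vec n) : ℝ :=
  ∑ i, ∑ j, d i * H i j * d j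

/-- Componentwise positive part `max{u, 0}`. -/
def posv {m : ℕ} (u : Fin m → ℝ) : Fin m → ℝ := fun i => max (u i) 0

/-- The ℓ∞ norm `‖u‖_∞ = maxᵢ |uᵢ|`. -/
def normInf {m : ℕ} (u : Fin m → ℝ) : ℝ := ⨆ i, |u i|

/-- The matrix ℓ∞ norm: maximum ℓ¹ norm of the rows. -/
def matNormInf {m n : ℕ} (M : Matrix (Fin m) (Fin n) ℝ) : ℝ := ⨆ i, ∑ j, |M i j|

/-- `min_{‖d‖ ≤ Δ} ‖max{c + Md, 0}‖_∞` over the Euclidean ball of radius `Δ`. -/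
def vinf {m n : ℕ} (Δ : ℝ) (c : Fin m → ℝ) (M : Matrix (Fin m) (Fin n) ℝ) : ℝ :=
  sInf {t | ∃ d : Vec n, ‖d‖ ≤ Δ ∧ t = normInf (posv (c + M.mulVec d))}

/-! ### Auxiliary lemmas -/

lemma coord_abs_le_norm {n : ℕ} (d : Vec n) (j : Fin n) : |d j| ≤ ‖d‖ := by
  rw [EuclideanSpace.norm_eq, ← Real.sqrt_sq_eq_abs]
  apply Real.sqrt_le_sqrt
  have h : ‖d j‖ ^ 2 ≤ ∑ i, ‖d i‖ ^ 2 :=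
    Finset.single_le_sum (f := fun i => ‖d i‖ ^ 2) (fun i _ => sq_nonneg _) (Finset.mem_univ j)
  simpa [Real.norm_eq_abs, sq_abs] using h

lemma abs_le_of_normInf_le {m : ℕ} {u : Fin m → ℝ} {ε : ℝ} (h : normInf u ≤ ε) (i : Fin m) :
    |u i| ≤ ε := by
  refine le_trans ?_ h
  exact le_ciSup (Set.finite_range fun k => |u k|).bddAbove i

lemma row_le_of_matNormInf_le {m n : ℕ} {M : Matrix (Fin m) (Fin n) ℝ} {ε : ℝ}
    (h : matNormInf M ≤ ε) (i : Fin m) : ∑ j, |M i j| ≤ ε := by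
  refine le_trans ?_ h
  exact le_ciSup (Set.finite_range fun k => ∑ j, |M k j|).bddAbove i

lemma normInf_nonneg {m : ℕ} (u : Fin m → ℝ) : 0 ≤ normInf u :=
  Real.iSup_nonneg fun _ => abs_nonneg _

lemma abs_sum_mul_le {n : ℕ} (A : Fin n → ℝ) (d : Vec n) {β : ℝ} (hβ : ‖d‖ ≤ β) :
    |∑ j, A j * d j| ≤ (∑ j, |A j|) * β := by
  calc |∑ j, A j * d j| ≤ ∑ j, |A j * d j| := Finset.abs_sum_le_sum_abs _ _
    _ ≤ ∑ j, |A j| * β := by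
        refine Finset.sum_le_sum fun j _ => ?_
        rw [abs_mul]
        exact mul_le_mul_of_nonneg_left ((coord_abs_le_norm d j).trans hβ) (abs_nonneg _)
    _ = (∑ j, |A j|) * β := by rw [← Finset.sum_mul]

lemma vinf_le_vinf_add {m n : ℕ} {Δ εc εJ : ℝ} (hΔ : 0 < Δ) (hεc : 0 ≤ εc) (hεJ : 0 ≤ εJ)
    (c ct : Fin m → ℝ) (M Mt : Matrix (Fin m) (Fin n) ℝ)
    (hc : ∀ i, |ct i - c i| ≤ εc) (hM : ∀ i, ∑ j, |Mt i j - M i j| ≤ εJ) :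
    vinf Δ ct Mt ≤ vinf Δ c M + (εc + εJ * Δ) := by
  have hδ : 0 ≤ εc + εJ * Δ := by positivity
  rw [vinf, vinf, ← sub_le_iff_le_add]
  refine le_csInf ⟨_, 0, by simpa using hΔ.le, rfl⟩ ?_
  rintro t ⟨d, hd, rfl⟩
  rw [sub_le_iff_le_add]
  have hbdd : BddBelow {t | ∃ d : Vec n, ‖d‖ ≤ Δ ∧ t = normInf (posv (ct + Mt.mulVec d))} :=
    ⟨0, by rintro t ⟨d, hd, rfl⟩; exact normInf_nonneg _⟩
  refine (csInf_le hbdd ⟨d, hd, rfl⟩).trans ?_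
  refine Real.iSup_le (fun i => ?_) (add_nonneg (normInf_nonneg _) hδ)
  have h1 : |(ct + Mt.mulVec d) i - (c + M.mulVec d) i| ≤ εc + εJ * Δ := by
    have heq : (ct + Mt.mulVec d) i - (c + M.mulVec d) i
        = (ct i - c i) + ∑ j, (Mt i j - M i j) * d j := by
      simp only [Pi.add_apply, Matrix.mulVec, dotProduct, sub_mul,
        Finset.sum_sub_distrib]
      ring
    rw [heq]
    have h2 : |∑ j, (Mt i j - M i j) * d j| ≤ εJ * Δ :=
      (abs_sum_mul_le _ d hd).trans (mul_le_mul_of_nonneg_right (hM i) hΔ.le)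
    calc |(ct i - c i) + ∑ j, (Mt i j - M i j) * d j|
        ≤ |ct i - c i| + |∑ j, (Mt i j - M i j) * d j| := abs_add_le _ _
      _ ≤ εc + εJ * Δ := add_le_add (hc i) h2
  have h3 : posv (c + M.mulVec d) i ≤ normInf (posv (c + M.mulVec d)) := by
    refine le_trans (le_abs_self _) ?_
    exact le_ciSup (Set.finite_range fun k => |posv (c + M.mulVec d) k|).bddAbove i
  have h4 : |posv (ct + Mt.mulVec d) i| = posv (ct + Mt.mulVec d) i :=
    abs_of_nonneg (le_max_right _ _)
  rw [h4]
  have h5 : (ct + Mt.mulVec d) i ≤ (c + M.mulVec d) i + (εc + εJ * Δ) := by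
    have := abs_le.mp h1
    linarith [this.2]
  have h6 : posv (ct + Mt.mulVec d) i ≤ posv (c + M.mulVec d) i + (εc + εJ * Δ) := by
    simp only [posv]
    refine max_le ?_ ?_
    · exact h5.trans (by linarith [le_max_left ((c + M.mulVec d) i) (0:ℝ)])
    · positivity
  linarith [h6, h3]

lemma kkt_le {m n : ℕ} {H : Matrix (Fin n) (Fin n) ℝ} (hH : H.PosDef)
    (g : Vec n) (c : Fin m → ℝ) (M : Matrix (Fin m) (Fin n) ℝ) (ρ : ℝ)
    (dt : Vec n) (lam : Fin m → ℝ)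
    (hstat : ∀ j, g j + H.mulVec dt j + ∑ i, M i j * lam i = 0)
    (hcomp : ∀ i, lam i * (c i + M.mulVec dt i - ρ) = 0)
    (d : Vec n) :
    dotp g dt + (1/2) * quad H dt ≤ dotp g d + (1/2) * quad H d
      + ∑ i, lam i * (c i + M.mulVec d i - ρ) := by
  set e : Vec n := d - dt with he
  have heapp : ∀ j, e j = d j - dt j := fun j => rfl
  have hd' : ∀ j, d j = dt j + e j := fun j => by rw [heapp]; ring
  have hsym : ∀ i j, H i j = H j i := fun i j => by
    have := hH.1.apply i j
    simpa using this.symm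
  have hpsd : (0:ℝ) ≤ quad H e := by
    have h2 := hH.posSemidef.dotProduct_mulVec_nonneg e.ofLp
    simpa [quad, dotProduct, Matrix.mulVec, Finset.mul_sum, mul_assoc] using h2
  have hmv : ∀ j, H.mulVec dt j = ∑ i, H j i * dt i := fun j => by
    simp [Matrix.mulVec, dotProduct]
  have hT : ∑ j, H.mulVec dt j * e j = ∑ i, ∑ j, dt i * H i j * e j := by
    simp_rw [hmv, Finset.sum_mul]
    rw [Finset.sum_comm]
    refine Finset.sum_congr rfl fun i _ => Finset.sum_congr rfl fun j _ => ?_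
    rw [hsym i j]; ring
  have hcross : ∑ i, ∑ j, e i * H i j * dt j = ∑ i, ∑ j, dt i * H i j * e j := by
    rw [Finset.sum_comm]
    refine Finset.sum_congr rfl fun x _ => Finset.sum_congr rfl fun y _ => ?_
    rw [hsym y x]; ring
  have hq : quad H d = quad H dt + 2 * (∑ j, H.mulVec dt j * e j) + quad H e := by
    have step1 : quad H d = ∑ i, ∑ j, (dt i * H i j * dt j + dt i * H i j * e j
        + e i * H i j * dt j + e i * H i j * e j) := by
      refine Finset.sum_congr rfl fun i _ => Finset.sum_congr rfl fun j _ => ?_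
      rw [hd' i, hd' j]; ring
    rw [step1]
    simp only [Finset.sum_add_distrib]
    rw [hcross, hT]
    simp only [quad]
    ring
  have hdot : dotp g d = dotp g dt + ∑ j, g j * e j := by
    simp only [dotp]
    rw [← Finset.sum_add_distrib]
    refine Finset.sum_congr rfl fun j _ => ?_
    rw [hd' j]; ring
  have hstat' : ∑ j, (g j + H.mulVec dt j) * e j
      = -∑ i, lam i * (M.mulVec d i - M.mulVec dt i) := by
    have h1 : ∀ j, g j + H.mulVec dt j = -∑ i, M i j * lam i := fun j => by
      linarith [hstat j]
    calc ∑ j, (g j + H.mulVec dt j) * e j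
        = ∑ j, (-∑ i, M i j * lam i) * e j :=
          Finset.sum_congr rfl fun j _ => by rw [h1 j]
      _ = -∑ j, ∑ i, M i j * lam i * e j := by
          rw [← Finset.sum_neg_distrib]
          refine Finset.sum_congr rfl fun j _ => ?_
          rw [neg_mul, Finset.sum_mul]
      _ = -∑ i, ∑ j, M i j * lam i * e j := by rw [Finset.sum_comm]
      _ = -∑ i, lam i * (M.mulVec d i - M.mulVec dt i) := by
          congr 1
          refine Finset.sum_congr rfl fun i _ => ?_
          have hrow : M.mulVec d i - M.mulVec dt i = ∑ j, M i j * e j := by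
            simp only [Matrix.mulVec, dotProduct, ← Finset.sum_sub_distrib]
            refine Finset.sum_congr rfl fun j _ => ?_
            rw [heapp]; ring
          rw [hrow, Finset.mul_sum]
          refine Finset.sum_congr rfl fun j _ => ?_
          ring
  have hsum : ∑ i, lam i * (M.mulVec d i - M.mulVec dt i)
      = ∑ i, lam i * (c i + M.mulVec d i - ρ) := by
    have hterm : ∀ i, lam i * (M.mulVec d i - M.mulVec dt i)
        = lam i * (c i + M.mulVec d i - ρ) - lam i * (c i + M.mulVec dt i - ρ) := fun i => by
      ring
    rw [Finset.sum_congr rfl fun i _ => hterm i, Finset.sum_sub_distrib,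
      Finset.sum_eq_zero fun i _ => hcomp i, sub_zero]
  have hsplit : ∑ j, (g j + H.mulVec dt j) * e j
      = (∑ j, g j * e j) + ∑ j, H.mulVec dt j * e j := by
    rw [← Finset.sum_add_distrib]
    refine Finset.sum_congr rfl fun j _ => ?_
    ring
  linarith [hq, hdot, hstat', hsum, hpsd, hsplit]

lemma abs_dotp_sub_le {n : ℕ} (gt g d : Vec n) : |dotp gt d - dotp g d| ≤ ‖gt - g‖ * ‖d‖ := by
  have h : dotp gt d - dotp g d = (inner ℝ (gt - g) d : ℝ) := by
    simp only [dotp, PiLp.inner_apply, RCLike.inner_apply, conj_trivial, PiLp.sub_apply,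
      sub_mul, Finset.sum_sub_distrib]
    rw [← Finset.sum_sub_distrib]
    exact Finset.sum_congr rfl fun i _ => by ring
  rw [h]
  exact abs_real_inner_le_norm _ _

/-- If the noisy and exact relaxed QP subproblems have solutions `d̃`, `d̄` with
KKT multipliers bounded in the ℓ∞ norm by `Λ`, then the noisy and exact optimality
measures differ by at most `E_ε^ψ = 2ε_f + ε_g·r_l + mΛ(2ε_c + ε_J(r_l + Δ))`. -/
theorem abs_psio_sub_psio_le
    {m n : ℕ} (Δ Λ rl εf εg εc εJ : ℝ)
    (hΔ : 0 < Δ) (hΛ : 0 < Λ) (hrl : 0 < rl)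
    (hεf : 0 ≤ εf) (hεg : 0 ≤ εg) (hεc : 0 ≤ εc) (hεJ : 0 ≤ εJ)
    (H : Matrix (Fin n) (Fin n) ℝ) (hH : H.PosDef)
    (f ft : ℝ) (g gt : Vec n) (c ct : Fin m → ℝ) (M Mt : Matrix (Fin m) (Fin n) ℝ)
    (hf : |ft - f| ≤ εf) (hg : ‖gt - g‖ ≤ εg)
    (hc : normInf (ct - c) ≤ εc) (hM : matNormInf (Mt - M) ≤ εJ)
    (ρ ρb : ℝ) (hρ : ρ = vinf Δ ct Mt) (hρb : ρb = vinf Δ c M)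
    -- the noisy QP solution `d̃` with its KKT multiplier `λ̃`
    (dt : Vec n) (hdtfeas : ∀ i, ct i + Mt.mulVec dt i ≤ ρ)
    (hdtopt : ∀ d : Vec n, (∀ i, ct i + Mt.mulVec d i ≤ ρ) →
      dotp gt dt + (1/2) * quad H dt ≤ dotp gt d + (1/2) * quad H d)
    (lamt : Fin m → ℝ) (hlamt0 : ∀ i, 0 ≤ lamt i)
    (hstatt : ∀ j, gt j + H.mulVec dt j + ∑ i, Mt i j * lamt i = 0)
    (hcompt : ∀ i, lamt i * (ct i + Mt.mulVec dt i - ρ) = 0)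
    (hlamt : normInf lamt ≤ Λ)
    -- the exact QP solution `d̄` with its KKT multiplier `λ̄`
    (db : Vec n) (hdbfeas : ∀ i, c i + M.mulVec db i ≤ ρb)
    (hdbopt : ∀ d : Vec n, (∀ i, c i + M.mulVec d i ≤ ρb) →
      dotp g db + (1/2) * quad H db ≤ dotp g d + (1/2) * quad H d)
    (lamb : Fin m → ℝ) (hlamb0 : ∀ i, 0 ≤ lamb i)
    (hstatb : ∀ j, g j + H.mulVec db j + ∑ i, M i j * lamb i = 0)
    (hcompb : ∀ i, lamb i * (c i + M.mulVec db i - ρb) = 0)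
    (hlamb : normInf lamb ≤ Λ)
    (hdt : ‖dt‖ ≤ rl) (hdb : ‖db‖ ≤ rl) :
    |(-(dotp gt dt + (1/2) * quad H dt)) - (-(dotp g db + (1/2) * quad H db))|
      ≤ 2 * εf + εg * rl + (m : ℝ) * Λ * (2 * εc + εJ * (rl + Δ)) := by
  set B : ℝ := 2 * εc + εJ * (rl + Δ) with hBdef
  have hB : 0 ≤ B := by positivity
  have hBsplit : εJ * (rl + Δ) = εJ * rl + εJ * Δ := by ring
  -- componentwise noise bounds
  have hc' : ∀ i, |ct i - c i| ≤ εc := fun i => abs_le_of_normInf_le hc i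
  have hc'' : ∀ i, |c i - ct i| ≤ εc := fun i => by rw [abs_sub_comm]; exact hc' i
  have hM' : ∀ i, ∑ j, |Mt i j - M i j| ≤ εJ := fun i => row_le_of_matNormInf_le hM i
  have hM'' : ∀ i, ∑ j, |M i j - Mt i j| ≤ εJ := fun i => by
    refine le_trans (le_of_eq (Finset.sum_congr rfl fun j _ => abs_sub_comm _ _)) (hM' i)
  have hlamt' : ∀ i, lamt i ≤ Λ := fun i =>
    (le_abs_self _).trans (abs_le_of_normInf_le hlamt i)
  have hlamb' : ∀ i, lamb i ≤ Λ := fun i =>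
    (le_abs_self _).trans (abs_le_of_normInf_le hlamb i)
  -- relaxation levels are close
  have hρ1 : ρ ≤ ρb + (εc + εJ * Δ) := by
    rw [hρ, hρb]; exact vinf_le_vinf_add hΔ hεc hεJ c ct M Mt hc' hM'
  have hρ2 : ρb ≤ ρ + (εc + εJ * Δ) := by
    rw [hρ, hρb]; exact vinf_le_vinf_add hΔ hεc hεJ ct c Mt M hc'' hM''
  -- row perturbation bounds
  have hrowb : ∀ i, |Mt.mulVec db i - M.mulVec db i| ≤ εJ * rl := by
    intro i
    have heq : Mt.mulVec db i - M.mulVec db i = ∑ j, (Mt i j - M i j) * db j := by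
      simp only [Matrix.mulVec, dotProduct, ← Finset.sum_sub_distrib]
      refine Finset.sum_congr rfl fun j _ => ?_
      ring
    rw [heq]
    exact (abs_sum_mul_le _ db hdb).trans (mul_le_mul_of_nonneg_right (hM' i) hrl.le)
  have hrowt : ∀ i, |M.mulVec dt i - Mt.mulVec dt i| ≤ εJ * rl := by
    intro i
    have heq : M.mulVec dt i - Mt.mulVec dt i = ∑ j, (M i j - Mt i j) * dt j := by
      simp only [Matrix.mulVec, dotProduct, ← Finset.sum_sub_distrib]
      refine Finset.sum_congr rfl fun j _ => ?_
      ring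
    rw [heq]
    exact (abs_sum_mul_le _ dt hdt).trans (mul_le_mul_of_nonneg_right (hM'' i) hrl.le)
  -- direction (A): noisy value ≤ exact value + error
  have hA : dotp gt dt + (1/2) * quad H dt
      ≤ dotp g db + (1/2) * quad H db + (εg * rl + (m : ℝ) * Λ * B) := by
    have h1 := kkt_le hH gt ct Mt ρ dt lamt hstatt hcompt db
    have hsum : ∑ i, lamt i * (ct i + Mt.mulVec db i - ρ) ≤ (m : ℝ) * Λ * B := by
      have htermB : ∀ i, lamt i * (ct i + Mt.mulVec db i - ρ) ≤ Λ * B := by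
        intro i
        have e1 := abs_le.mp (hc' i)
        have e2 := abs_le.mp (hrowb i)
        have e3 := hdbfeas i
        have hterm : ct i + Mt.mulVec db i - ρ ≤ B := by
          rw [hBdef]; linarith [hρ2, hBsplit]
        calc lamt i * (ct i + Mt.mulVec db i - ρ) ≤ lamt i * B :=
              mul_le_mul_of_nonneg_left hterm (hlamt0 i)
          _ ≤ Λ * B := mul_le_mul_of_nonneg_right (hlamt' i) hB
      calc ∑ i, lamt i * (ct i + Mt.mulVec db i - ρ) ≤ ∑ _i : Fin m, Λ * B :=
            Finset.sum_le_sum fun i _ => htermB i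
        _ = (m : ℝ) * Λ * B := by
            rw [Finset.sum_const, Finset.card_univ]
            simp [mul_assoc]
    have h2 : dotp gt db ≤ dotp g db + εg * rl := by
      have := abs_le.mp ((abs_dotp_sub_le gt g db).trans
        (mul_le_mul hg hdb (norm_nonneg _) hεg))
      linarith [this.2]
    calc dotp gt dt + (1/2) * quad H dt
        ≤ dotp gt db + (1/2) * quad H db + ∑ i, lamt i * (ct i + Mt.mulVec db i - ρ) := h1
      _ ≤ dotp gt db + (1/2) * quad H db + (m : ℝ) * Λ * B := add_le_add le_rfl hsum
      _ ≤ (dotp g db + εg * rl) + (1/2) * quad H db + (m : ℝ) * Λ * B :=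
          add_le_add (add_le_add h2 le_rfl) le_rfl
      _ = dotp g db + (1/2) * quad H db + (εg * rl + (m : ℝ) * Λ * B) := by ring
  -- direction (B): exact value ≤ noisy value + error
  have hB2 : dotp g db + (1/2) * quad H db
      ≤ dotp gt dt + (1/2) * quad H dt + (εg * rl + (m : ℝ) * Λ * B) := by
    have h1 := kkt_le hH g c M ρb db lamb hstatb hcompb dt
    have hsum : ∑ i, lamb i * (c i + M.mulVec dt i - ρb) ≤ (m : ℝ) * Λ * B := by
      have htermB : ∀ i, lamb i * (c i + M.mulVec dt i - ρb) ≤ Λ * B := by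
        intro i
        have e1 := abs_le.mp (hc'' i)
        have e2 := abs_le.mp (hrowt i)
        have e3 := hdtfeas i
        have hterm : c i + M.mulVec dt i - ρb ≤ B := by
          rw [hBdef]; linarith [hρ1, hBsplit]
        calc lamb i * (c i + M.mulVec dt i - ρb) ≤ lamb i * B :=
              mul_le_mul_of_nonneg_left hterm (hlamb0 i)
          _ ≤ Λ * B := mul_le_mul_of_nonneg_right (hlamb' i) hB
      calc ∑ i, lamb i * (c i + M.mulVec dt i - ρb) ≤ ∑ _i : Fin m, Λ * B :=
            Finset.sum_le_sum fun i _ => htermB i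
        _ = (m : ℝ) * Λ * B := by
            rw [Finset.sum_const, Finset.card_univ]
            simp [mul_assoc]
    have h2 : dotp g dt ≤ dotp gt dt + εg * rl := by
      have := abs_le.mp ((abs_dotp_sub_le gt g dt).trans
        (mul_le_mul hg hdt (norm_nonneg _) hεg))
      linarith [this.1]
    calc dotp g db + (1/2) * quad H db
        ≤ dotp g dt + (1/2) * quad H dt + ∑ i, lamb i * (c i + M.mulVec dt i - ρb) := h1
      _ ≤ dotp g dt + (1/2) * quad H dt + (m : ℝ) * Λ * B := add_le_add le_rfl hsum
      _ ≤ (dotp gt dt + εg * rl) + (1/2) * quad H dt + (m : ℝ) * Λ * B :=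
          add_le_add (add_le_add h2 le_rfl) le_rfl
      _ = dotp gt dt + (1/2) * quad H dt + (εg * rl + (m : ℝ) * Λ * B) := by ring
  rw [abs_le]
  constructor <;> nlinarith [hA, hB2, hεf]
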